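/- Let 2 ≤ p < q be even integers and A an n×n Hermitian matrix. Then (p! · h_p(λ(A)))^{1/p} ≤ (q! · h_q(λ(A)))^{1/q}. -/

import Mathlib

open MeasureTheory ProbabilityTheory Real Set Finset
open scoped ENNReal

/-! Auxiliary: moments of the exponential distribution. -/

lemma expProof_pdf_nn_meas : Measurable (fun t : ℝ => (gammaPDFReal 1 1 t).toNNReal) :=
  (measurable_gammaPDFReal 1 1).real_toNNReal

lemma expProof_expMeasure_eq : expMeasure 1 =
    (volume : Measure ℝ).withDensity (fun t => ((gammaPDFReal 1 1 t).toNNReal : ℝ≥0∞)) := rfl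

lemma expProof_pdfReal_eq (t : ℝ) :
    gammaPDFReal 1 1 t = Set.indicator (Ici 0) (fun s => rexp (-s)) t := by
  rw [gammaPDFReal]
  by_cases h : 0 ≤ t
  · simp [h, Real.Gamma_one]
  · simp [h]

lemma expProof_pdf_smul (g : ℝ → ℝ) (t : ℝ) :
    (gammaPDFReal 1 1 t).toNNReal • g t = Set.indicator (Ici 0) (fun s => rexp (-s) * g s) t := by
  have hnn := gammaPDFReal_nonneg (a := 1) (r := 1) zero_lt_one zero_lt_one t
  rw [NNReal.smul_def, Real.coe_toNNReal _ hnn, expProof_pdfReal_eq]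
  by_cases h : t ∈ Ici (0:ℝ) <;> simp [h]

lemma expProof_exp_pow_fun_eq (k : ℕ) :
    (fun x : ℝ => rexp (-x) * x ^ ((k : ℝ) + 1 - 1)) = fun s => rexp (-s) * s ^ k := by
  funext s
  rw [add_sub_cancel_right, Real.rpow_natCast]

lemma expProof_moment_int (k : ℕ) :
    ∫ t, t ^ k ∂(expMeasure 1) = k.factorial := by
  rw [expProof_expMeasure_eq, integral_withDensity_eq_integral_smul expProof_pdf_nn_meas]
  simp_rw [expProof_pdf_smul (fun t => t ^ k)]
  rw [MeasureTheory.integral_indicator measurableSet_Ici,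
    integral_Ici_eq_integral_Ioi]
  have h := Real.Gamma_eq_integral (s := (k : ℝ) + 1) (by positivity)
  rw [Real.Gamma_nat_eq_factorial, expProof_exp_pow_fun_eq] at h
  exact h.symm

lemma expProof_moment_integrable (k : ℕ) :
    Integrable (fun t : ℝ => t ^ k) (expMeasure 1) := by
  rw [expProof_expMeasure_eq, integrable_withDensity_iff_integrable_smul expProof_pdf_nn_meas]
  simp_rw [expProof_pdf_smul (fun t => t ^ k)]
  rw [integrable_indicator_iff measurableSet_Ici]
  have h := Real.GammaIntegral_convergent (s := (k : ℝ) + 1) (by positivity)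
  rw [expProof_exp_pow_fun_eq] at h
  exact Iff.mpr integrableOn_Ici_iff_integrableOn_Ioi h

/-! The statement's `chs`. -/

/-- Complete homogeneous symmetric polynomial of degree `d` in `n` real variables:
the sum of all degree-`d` monomials in `x 0, ..., x (n-1)`. -/
noncomputable def chs (n d : ℕ) (x : Fin n → ℝ) : ℝ :=
  ∑ s : Sym (Fin n) d, ((s : Multiset (Fin n)).map x).prod

/-! Combinatorial identity: `chs` as a sum over `piAntidiag`. -/

lemma expProof_sum_count_univ {n : ℕ} (m : Multiset (Fin n)) :
    ∑ i : Fin n, m.count i = Multiset.card m := by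
  rw [← Multiset.toFinset_sum_count_eq]
  exact (Finset.sum_subset (Finset.subset_univ _) (fun i _ hi => by
    rw [Multiset.count_eq_zero]
    simpa [Multiset.mem_toFinset] using hi)).symm

lemma chs_eq_sum_piAntidiag (n d : ℕ) (x : Fin n → ℝ) :
    chs n d x = ∑ k ∈ piAntidiag (univ : Finset (Fin n)) d, ∏ i, x i ^ k i := by
  rw [chs]
  refine Finset.sum_bij (i := fun (s : Sym (Fin n) d) _ => fun a => (s : Multiset (Fin n)).count a)
    ?_ ?_ ?_ ?_
  · intro s _
    rw [Finset.mem_piAntidiag]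
    exact ⟨by rw [expProof_sum_count_univ]; exact s.2, fun i _ => Finset.mem_univ i⟩
  · intro s _ s' _ h
    apply Sym.coe_injective
    ext a
    exact congrFun h a
  · intro k hk
    rw [Finset.mem_piAntidiag] at hk
    refine ⟨⟨∑ i : Fin n, Multiset.replicate (k i) i, ?_⟩, Finset.mem_univ _, ?_⟩
    · rw [Multiset.card_sum]
      simpa using hk.1
    · funext a
      simp only [Sym.coe_mk]
      rw [Multiset.count_sum']
      simp [Multiset.count_replicate, Finset.sum_ite_eq]
  · intro s _
    rw [Finset.prod_multiset_map_count]
    exact Finset.prod_subset (Finset.subset_univ _) (fun i _ hi => by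
      rw [Multiset.count_eq_zero_of_notMem (by simpa [Multiset.mem_toFinset] using hi), pow_zero])

/-! Probability space: i.i.d. standard exponentials. -/

def Ex : Type := ℝ
instance : MeasurableSpace Ex := inferInstanceAs (MeasurableSpace ℝ)
noncomputable instance : MeasureSpace Ex := ⟨expMeasure 1⟩
instance : IsProbabilityMeasure (volume : Measure Ex) :=
  isProbabilityMeasure_expMeasure one_pos
instance : SigmaFinite (volume : Measure Ex) := inferInstance
def Ex.toR : Ex → ℝ := id
lemma Ex.measurable_toR : Measurable Ex.toR := measurable_id
lemma Ex.moment_int (k : ℕ) : ∫ t : Ex, (t.toR) ^ k = k.factorial := expProof_moment_int k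
lemma Ex.moment_integrable (k : ℕ) : Integrable (fun t : Ex => t.toR ^ k) :=
  expProof_moment_integrable k

section
variable {n : ℕ} (x : Fin n → ℝ)

lemma expProof_term_integrable (k : Fin n → ℕ) :
    Integrable (fun t : Fin n → Ex => ∏ i, (x i * (t i).toR) ^ k i) := by
  apply Integrable.fintype_prod (f := fun i (t : Ex) => (x i * t.toR) ^ k i)
  intro i
  simp_rw [mul_pow]
  exact (Ex.moment_integrable (k i)).const_mul _

lemma expProof_term_integral (k : Fin n → ℕ) :
    ∫ t : Fin n → Ex, ∏ i, (x i * (t i).toR) ^ k i = ∏ i, (x i ^ k i * (k i).factorial) := by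
  rw [volume_pi, integral_fintype_prod_eq_prod (f := fun i (t : Ex) => (x i * t.toR) ^ k i)]
  congr 1
  funext i
  simp_rw [mul_pow]
  rw [integral_const_mul, Ex.moment_int]

lemma expProof_key_integrable (d : ℕ) :
    Integrable (fun t : Fin n → Ex => (∑ i, x i * (t i).toR) ^ d) := by
  simp_rw [Finset.sum_pow_eq_sum_piAntidiag (univ : Finset (Fin n)) _ d]
  apply integrable_finset_sum
  intro k _
  exact (expProof_term_integrable x k).const_mul _

lemma expProof_key_integral (d : ℕ) :
    ∫ t : Fin n → Ex, (∑ i, x i * (t i).toR) ^ d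
      = d.factorial * ∑ k ∈ piAntidiag (univ : Finset (Fin n)) d, ∏ i, x i ^ k i := by
  simp_rw [Finset.sum_pow_eq_sum_piAntidiag (univ : Finset (Fin n)) _ d]
  rw [integral_finset_sum]
  · rw [Finset.mul_sum]
    apply Finset.sum_congr rfl
    intro k hk
    rw [integral_const_mul, expProof_term_integral, Finset.prod_mul_distrib]
    rw [Finset.mem_piAntidiag] at hk
    have hms := Nat.multinomial_spec (univ : Finset (Fin n)) k
    rw [hk.1] at hms
    push_cast [← hms]
    ring
  · intro k _
    exact (expProof_term_integrable x k).const_mul _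

lemma expProof_X_meas : Measurable (fun t : Fin n → Ex => ∑ i, x i * (t i).toR) := by
  apply Finset.measurable_sum
  intro i _
  exact (Ex.measurable_toR.comp (measurable_pi_apply i)).const_mul _

lemma expProof_chs_mul_nonneg {d : ℕ} (hd : Even d) :
    0 ≤ (d.factorial : ℝ) * chs n d x := by
  rw [chs_eq_sum_piAntidiag, ← expProof_key_integral]
  exact integral_nonneg fun t => hd.pow_nonneg _

lemma expProof_eLpNorm'_eq {d : ℕ} (hd : Even d) (hd0 : 0 < d) :
    eLpNorm' (fun t : Fin n → Ex => ∑ i, x i * (t i).toR) d volume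
      = ENNReal.ofReal (((d.factorial : ℝ) * chs n d x) ^ ((1:ℝ)/d)) := by
  set f := fun t : Fin n → Ex => ∑ i, x i * (t i).toR with hf
  have habs : ∀ t, |f t| ^ d = f t ^ d := fun t => hd.pow_abs (f t)
  have hint : Integrable (fun t => |f t| ^ d) := by
    simp_rw [habs]; exact expProof_key_integrable x d
  have hnn : 0 ≤ᵐ[volume] fun t => |f t| ^ d :=
    Filter.Eventually.of_forall fun t => by positivity
  have h1 : ∫⁻ t, ‖f t‖ₑ ^ (d : ℝ) = ENNReal.ofReal (∫ t, |f t| ^ d) := by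
    rw [ofReal_integral_eq_lintegral_ofReal hint hnn]
    apply lintegral_congr
    intro t
    rw [ENNReal.ofReal_pow (abs_nonneg _), ← ENNReal.rpow_natCast, Real.enorm_eq_ofReal_abs]
  have h2 : ∫ t, |f t| ^ d = (d.factorial : ℝ) * chs n d x := by
    simp_rw [habs]
    rw [expProof_key_integral, chs_eq_sum_piAntidiag]
  have hnn2 : 0 ≤ (d.factorial : ℝ) * chs n d x := expProof_chs_mul_nonneg x hd
  rw [eLpNorm', h1, h2, ← ENNReal.ofReal_rpow_of_nonneg hnn2 (by positivity)]
end

theorem expProof_main_ineq {n : ℕ} (x : Fin n → ℝ) (p q : ℕ) (hp : Even p) (hq : Even q)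
    (hp2 : 2 ≤ p) (hpq : p < q) :
    ((p.factorial : ℝ) * chs n p x) ^ ((1 : ℝ) / p) ≤
      ((q.factorial : ℝ) * chs n q x) ^ ((1 : ℝ) / q) := by
  have hp0 : 0 < p := lt_of_lt_of_le two_pos hp2
  have hq0 : 0 < q := hp0.trans hpq
  have hle := eLpNorm'_le_eLpNorm'_of_exponent_le (f := fun t : Fin n → Ex => ∑ i, x i * (t i).toR)
    (p := (p:ℝ)) (q := (q:ℝ)) (by exact_mod_cast hp0) (by exact_mod_cast hpq.le)
    volume (expProof_X_meas x).aestronglyMeasurable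
  rw [expProof_eLpNorm'_eq x hp hp0, expProof_eLpNorm'_eq x hq hq0] at hle
  exact (ENNReal.ofReal_le_ofReal_iff
    (Real.rpow_nonneg (expProof_chs_mul_nonneg x hq) _)).mp hle

theorem chs_monotone_in_degree (n p q : ℕ) (hp : Even p) (hq : Even q)
    (hp2 : 2 ≤ p) (hpq : p < q)
    (A : Matrix (Fin n) (Fin n) ℂ) (hA : A.IsHermitian) :
    ((p.factorial : ℝ) * chs n p hA.eigenvalues) ^ ((1 : ℝ) / p) ≤
      ((q.factorial : ℝ) * chs n q hA.eigenvalues) ^ ((1 : ℝ) / q) :=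
  expProof_main_ineq hA.eigenvalues p q hp hq hp2 hpq
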